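/- Suppose F satisfies Assumption 1 with support bound h, and (S_k^{(n_k)})_{k≥1} is a sequence of finite-step sequential persuasions starting from μ satisfying the conditions of Assumption 3. Extend each S_k^{(n_k)} to an infinite sequential persuasion S_k by repeating trivial experiments after the first n_k steps, and represent each S_k by an h-branching sequential persuasion B_k = (C_n, π_n^{(k)}, β_n^{(k)}, η_n^{(k)})_{n∈ℕ}. Then there exists an h-branching sequential persuasion B* = (C_n, π_n^{*}, β_n^{*}, η_n^{*})_{n∈ℕ} starting from μ such that: for every ε > 0 and the corresponding n_ε from Assumption 3, Pr[B* terminates after n_ε steps] ≥ 1 − ε; and for every n ≥ 1 there exists a subsequence (B_{k_l})_{l≥1} such that for every 0 ≤ i ≤ n, (π_i^{(k_l)})_{l≥1} pointwise converges to π_i^{*}, (β_i^{(k_l)})_{l≥1} pointwise converges in total variation to β_i^{*}, and (η_i^{(k_l)})_{l≥1} pointwise weakly converges to η_i^{*}. -/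

import Mathlib

open Filter Topology
open scoped Classical

noncomputable section

/-- Δ(Ω): beliefs, i.e. probability distributions on the finite state space Ω,
as a subspace of Ω → ℝ (its topology agrees with the total-variation one). -/
abbrev Belief (Ω : Type*) [Fintype Ω] :=
  {p : Ω → ℝ // (∀ ω, 0 ≤ p ω) ∧ ∑ ω, p ω = 1}

variable {Ω : Type*} [Fintype Ω]

/-- An element of F₀: a finite-support experiment, i.e. a finitely supported probability
distribution over beliefs (keys are the distinct posteriors p_j, values the positive
weights λ_j). -/
structure SPExp (Ω : Type*) [Fintype Ω] where
  w : Belief Ω →₀ ℝ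
  nonneg : ∀ p, 0 ≤ w p
  sum_one : ∑ p ∈ w.support, w p = 1

namespace SPExp

/-- τ(e): the support of an experiment. -/
def tau (e : SPExp Ω) : Finset (Belief Ω) := e.w.support

/-- Expectation of a real-valued function under an experiment. -/
def expect (e : SPExp Ω) (f : Belief Ω → ℝ) : ℝ := ∑ p ∈ e.w.support, e.w p * f p

/-- σ(e): the barycenter (expectation) of an experiment. -/
def sigma (e : SPExp Ω) : Belief Ω :=
  ⟨fun ω => ∑ p ∈ e.w.support, e.w p * p.val ω,
   fun ω => Finset.sum_nonneg fun p _ => mul_nonneg (e.nonneg p) (p.2.1 ω),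
   by
     calc ∑ ω, ∑ p ∈ e.w.support, e.w p * p.val ω
         = ∑ p ∈ e.w.support, ∑ ω, e.w p * p.val ω := Finset.sum_comm
       _ = ∑ p ∈ e.w.support, e.w p * ∑ ω, p.val ω := by
           refine Finset.sum_congr rfl fun p _ => ?_
           rw [Finset.mul_sum]
       _ = ∑ p ∈ e.w.support, e.w p := by
           refine Finset.sum_congr rfl fun p _ => ?_
           rw [p.2.2, mul_one]
       _ = 1 := e.sum_one⟩

/-- The trivial experiment (1, p). -/
def triv (p : Belief Ω) : SPExp Ω where
  w := Finsupp.single p 1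
  nonneg := fun q => by
    rw [Finsupp.single_apply]
    split <;> norm_num
  sum_one := by
    rw [Finsupp.support_single_ne_zero _ one_ne_zero]
    simp

end SPExp

/-- T: the set of trivial experiments. -/
def Trivials (Ω : Type*) [Fintype Ω] : Set (SPExp Ω) := Set.range SPExp.triv

/-- Weak convergence of experiments, viewed as Borel probability measures on Δ(Ω). -/
def WeakTendsto (es : ℕ → SPExp Ω) (e : SPExp Ω) : Prop :=
  ∀ f : Belief Ω → ℝ, Continuous f →
    Tendsto (fun i => (es i).expect f) atTop (𝓝 (e.expect f))

/-- Convergence of beliefs in total variation. -/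
def TVTendsto (ps : ℕ → Belief Ω) (p : Belief Ω) : Prop :=
  Tendsto (fun i => ∑ ω, |(ps i).val ω - p.val ω|) atTop (𝓝 0)

/-- Histories, most recent step first: entries are (experiment taken, realized posterior);
the starting belief is kept separately. -/
abbrev Hist (Ω : Type*) [Fintype Ω] := List (SPExp Ω × Belief Ω)

/-- last(ξ): the current belief after history ξ started at μ. -/
def lastBelief (μ : Belief Ω) : Hist Ω → Belief Ω
  | [] => μ
  | (_, p) :: _ => p

/-- Pr[ξ]: the probability of a history. -/
def histProb : Hist Ω → ℝ
  | [] => 1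
  | (e, p) :: ξ => e.w p * histProb ξ

/-- A sequential persuasion starting from μ with feasible experiments F, given by its
history-dependent choice of the next (feasible, Bayes-plausible) experiment.  An n-step
sequential persuasion is such a strategy used for n steps; an infinite sequential
persuasion is the strategy itself. -/
structure SeqP {Ω : Type*} [Fintype Ω] (F : Set (SPExp Ω)) (μ : Belief Ω) where
  next : Hist Ω → SPExp Ω
  feasible : ∀ ξ, next ξ ∈ F
  bayes : ∀ ξ, (next ξ).sigma = lastBelief μ ξ

variable {F : Set (SPExp Ω)} {μ : Belief Ω}

/-- Expectation of g over the n-step histories of S extending ξ. -/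
def histExp (S : SeqP F μ) (g : Hist Ω → ℝ) : ℕ → Hist Ω → ℝ
  | 0, ξ => g ξ
  | n + 1, ξ => (S.next ξ).expect fun p => histExp S g n ((S.next ξ, p) :: ξ)

/-- Ξ_n: the set of n-step histories of S. -/
def Hists (S : SeqP F μ) : ℕ → Set (Hist Ω)
  | 0 => {[]}
  | n + 1 => {ξ' | ∃ ξ ∈ Hists S n, ∃ p ∈ (S.next ξ).tau, ξ' = (S.next ξ, p) :: ξ}

/-- ξ padded by l trivial steps. -/
def padHist (μ : Belief Ω) (ξ : Hist Ω) (l : ℕ) : Hist Ω :=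
  List.replicate l (SPExp.triv (lastBelief μ ξ), lastBelief μ ξ) ++ ξ

/-- S terminates after ξ: all subsequent choices (along trivial continuations of ξ)
are the trivial experiment. -/
def TerminatesAfter (S : SeqP F μ) (ξ : Hist Ω) : Prop :=
  ∀ l : ℕ, S.next (padHist μ ξ l) = SPExp.triv (lastBelief μ ξ)

/-- 𝒱(S⁽ⁿ⁾) = E[v(b_n)], the expected utility of the n-step persuasion given by the
first n steps of S. -/
def stepUtility (v : Belief Ω → ℝ) (S : SeqP F μ) (n : ℕ) : ℝ :=
  histExp S (fun ξ => v (lastBelief μ ξ)) n []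

/-- Pr[S terminates after n steps]. -/
def termProb (S : SeqP F μ) (n : ℕ) : ℝ :=
  histExp S (fun ξ => if TerminatesAfter S ξ then 1 else 0) n []

/-- 𝒱(S) for an infinite sequential persuasion S. -/
def infUtility (v : Belief Ω → ℝ) (S : SeqP F μ) : ℝ :=
  ⨆ n : ℕ, histExp S (fun ξ => if TerminatesAfter S ξ then v (lastBelief μ ξ) else 0) n []

/-- Pr[b_n ∈ O] for the belief b_n induced by S after n steps. -/
def massIn (S : SeqP F μ) (O : Set (Belief Ω)) (n : ℕ) : ℝ :=
  histExp S (fun ξ => if lastBelief μ ξ ∈ O then 1 else 0) n []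

/-- v_n(p): the optimal value over n-step sequential persuasions starting from p. -/
def vN (F : Set (SPExp Ω)) (v : Belief Ω → ℝ) (n : ℕ) (p : Belief Ω) : ℝ :=
  ⨆ S : SeqP F p, stepUtility v S n

/-- v_∞(p): the optimal value over infinite sequential persuasions starting from p. -/
def vInf (F : Set (SPExp Ω)) (v : Belief Ω → ℝ) (p : Belief Ω) : ℝ :=
  ⨆ S : SeqP F p, infUtility v S

/-- Assumption 1: a uniform support bound h, and weak closedness of F. -/
def Assumption1 (F : Set (SPExp Ω)) (h : ℕ) : Prop :=
  (∀ e ∈ F, e.tau.card ≤ h) ∧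
  ∀ es : ℕ → SPExp Ω, (∀ i, es i ∈ F) → ∀ e : SPExp Ω, WeakTendsto es e → e ∈ F

/-- Shannon entropy of a belief. -/
def entropy (p : Belief Ω) : ℝ := -∑ ω, p.val ω * Real.log (p.val ω)

/-- Assumption 2: every nontrivial feasible experiment lowers expected entropy by δ. -/
def Assumption2 (F : Set (SPExp Ω)) (δ : ℝ) : Prop :=
  ∀ e ∈ F \ Trivials Ω, e.expect entropy ≤ entropy e.sigma - δ

/-- S is (effectively) an n-step sequential persuasion: after n steps it only takes
trivial experiments. -/
def IsNStep (S : SeqP F μ) (n : ℕ) : Prop :=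
  ∀ ξ : Hist Ω, n ≤ ξ.length → S.next ξ = SPExp.triv (lastBelief μ ξ)

/-- Assumption 3 at prior μ: a sequence of finite-step sequential persuasions whose
values tend to v_∞(μ) and which terminate at a uniform rate. -/
def Assumption3 (F : Set (SPExp Ω)) (v : Belief Ω → ℝ) (μ : Belief Ω) : Prop :=
  ∃ (nk : ℕ → ℕ) (Sk : ℕ → SeqP F μ),
    (∀ k, IsNStep (Sk k) (nk k)) ∧
    Tendsto (fun k => stepUtility v (Sk k) (nk k)) atTop (𝓝 (vInf F v μ)) ∧
    ∀ ε : ℝ, 0 < ε → ∃ N : ℕ, ∀ k, N ≤ nk k → 1 - ε ≤ termProb (Sk k) N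

/-- v̂: the concave closure of v (the value of unconstrained Bayesian persuasion). -/
def concaveClosure (v : Belief Ω → ℝ) (p : Belief Ω) : ℝ :=
  sSup {x : ℝ | ∃ e : SPExp Ω, e.sigma = p ∧ x = e.expect v}

/-- O is implementable for (μ, F). -/
def Implementable (F : Set (SPExp Ω)) (μ : Belief Ω) (O : Set (Belief Ω)) : Prop :=
  ∀ ε : ℝ, 0 < ε → ∃ (n : ℕ) (S : SeqP F μ), 1 - ε < massIn S O n

/-- S is a Markov sequential persuasion compatible with (μ, D, Z, ρ). -/
def MarkovCompatible (S : SeqP F μ) (D Z : Set (Belief Ω)) (ρ : Belief Ω → SPExp Ω) : Prop :=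
  ∀ ξ : Hist Ω,
    (lastBelief μ ξ ∈ D → S.next ξ = ρ (lastBelief μ ξ)) ∧
    (lastBelief μ ξ ∈ Z → S.next ξ = SPExp.triv (lastBelief μ ξ))

/-- The j-th child of vertex m at depth n of the infinite h-ary tree. -/
def treeChild {h n : ℕ} (m : Fin (h ^ n)) (j : Fin h) : Fin (h ^ (n + 1)) :=
  ⟨m.val * h + j.val, by
    have h1 : m.val + 1 ≤ h ^ n := m.isLt
    have h2 : j.val < h := j.isLt
    calc m.val * h + j.val < m.val * h + h := by omega
      _ = (m.val + 1) * h := by ring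
      _ ≤ h ^ n * h := Nat.mul_le_mul h1 le_rfl
      _ = h ^ (n + 1) := (pow_succ h n).symm⟩

/-- An h-branching sequential persuasion starting from μ. -/
structure HBranch (Ω : Type*) [Fintype Ω] (F : Set (SPExp Ω)) (h : ℕ) (μ : Belief Ω) where
  π : ∀ n : ℕ, Fin (h ^ n) → ℝ
  β : ∀ n : ℕ, Fin (h ^ n) → Belief Ω
  η : ∀ n : ℕ, Fin (h ^ n) → SPExp Ω
  π_nonneg : ∀ n m, 0 ≤ π n m
  π_sum : ∀ n : ℕ, ∑ m, π n m = 1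
  η_mem : ∀ n m, η n m ∈ F
  β_root : ∀ m, β 0 m = μ
  compat_sigma : ∀ n m, (η n m).sigma = β n m
  compat_tau : ∀ (n : ℕ) (m : Fin (h ^ n)), ∀ p ∈ (η n m).tau,
    ∃ j : Fin h, β (n + 1) (treeChild m j) = p
  consistent : ∀ (n : ℕ) (m : Fin (h ^ n)) (p : Belief Ω),
    (∑ j : Fin h, if β (n + 1) (treeChild m j) = p then π (n + 1) (treeChild m j) else 0)
      = π n m * (η n m).w p

/-- c' (at depth n + l) is a descendant of c (at depth n) in the h-ary tree. -/
def Descendant {h : ℕ} : {n : ℕ} → (l : ℕ) → Fin (h ^ n) → Fin (h ^ (n + l)) → Prop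
  | _, 0, c, c' => c = c'
  | _, l + 1, c, c' => ∃ c'' j, Descendant l c c'' ∧ c' = treeChild c'' j

namespace HBranch

variable {h : ℕ}

/-- B terminates after vertex m at depth n. -/
def TermAfter (B : HBranch Ω F h μ) (n : ℕ) (m : Fin (h ^ n)) : Prop :=
  B.η n m ∈ Trivials Ω ∧
  ∀ (l : ℕ) (c' : Fin (h ^ (n + l))), Descendant l m c' → 0 < B.π (n + l) c' →
    B.η (n + l) c' ∈ Trivials Ω

/-- Pr[B terminates after n steps]. -/
def termProb (B : HBranch Ω F h μ) (n : ℕ) : ℝ :=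
  ∑ m : Fin (h ^ n), if B.TermAfter n m then B.π n m else 0

end HBranch

/-- B represents the infinite sequential persuasion S (via maps r_n : C_n → Ξ_n). -/
def Represents (S : SeqP F μ) {h : ℕ} (B : HBranch Ω F h μ) : Prop :=
  ∃ r : ∀ n : ℕ, Fin (h ^ n) → Hist Ω,
    ∀ n : ℕ,
      (∀ c, r n c ∈ Hists S n) ∧
      (∀ ξ ∈ Hists S n, histProb ξ = ∑ c, if r n c = ξ then B.π n c else 0) ∧
      (∀ c, lastBelief μ (r n c) = B.β n c ∧ S.next (r n c) = B.η n c) ∧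
      (∀ l : ℕ, ∀ ξ ∈ Hists S n, ∀ ξ' ∈ Hists S (n + l),
        (ξ <:+ ξ' ↔
          ∀ c' : Fin (h ^ (n + l)), r (n + l) c' = ξ' →
            ∃ c : Fin (h ^ n), r n c = ξ ∧ Descendant l c c'))

/-- The number of nontrivial experiments taken along a history. -/
def nontrivCount (ξ : Hist Ω) : ℕ :=
  ξ.countP fun s => decide (s.1 ∉ Trivials Ω)

end

/-! At every vertex of the h-ary tree the data of `B k` (the mass, the belief, and the weights
with which the experiment splits the mass among the children) lie in a compact set, and there are
countably many vertices, so along one subsequence all of them converge. The limits form an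
h-branching persuasion: the splitting identities and Bayes plausibility pass to the limit, and
weak closedness of `F` keeps the limit experiments feasible.

If `B*` does not terminate after a vertex at depth `N`, then some experiment at or below it with
positive mass is nontrivial. Positive mass persists along the subsequence, and so does
nontriviality, since weak limits of trivial experiments are trivial. So the mass on which `B*`
fails to terminate is at most the limit of the corresponding masses for `B k`, which are at most
`ε`: `B k` terminates whenever `Sk k` does, and `Sk k` terminates after `N` steps with
probability `1` once `nk k < N`. -/

open Filter Topology Finset

instance {Ω : Type*} [Fintype Ω] : CompactSpace (Belief Ω) :=
  isCompact_iff_compactSpace.mp (isCompact_stdSimplex ℝ Ω)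

theorem tvTendsto_of_tendsto {Ω : Type*} [Fintype Ω] {ps : ℕ → Belief Ω} {p : Belief Ω}
    (hp : Tendsto ps atTop (𝓝 p)) : TVTendsto ps p := by
  have hcoord ω : Tendsto (fun i => (ps i).val ω) atTop (𝓝 (p.val ω)) :=
    tendsto_pi_nhds.1 (tendsto_subtype_rng.1 hp) ω
  simpa [TVTendsto] using tendsto_finsetSum univ fun ω _ => ((hcoord ω).sub_const (p.val ω)).abs

theorem Finsupp.sum_mapDomain_equivFunOnFinite_symm {ι β : Type*} [Fintype ι] (q : ι → β)
    (lam : ι → ℝ) (f : β → ℝ) :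
    (Finsupp.mapDomain q (Finsupp.equivFunOnFinite.symm lam)).sum (fun p a => a * f p)
      = ∑ i, lam i * f (q i) := by
  rw [Finsupp.sum_mapDomain_index (fun _ => zero_mul _) (fun _ _ _ => add_mul _ _ _),
    Finsupp.sum_fintype _ _ fun _ => zero_mul _]
  rfl

namespace SPExp

variable {Ω : Type*} [Fintype Ω]

@[ext]
theorem ext {e e' : SPExp Ω} (h : e.w = e'.w) : e = e' := by
  cases e; cases e'; simpa using h

theorem expect_const (e : SPExp Ω) (c : ℝ) : e.expect (fun _ => c) = c := by
  rw [expect, ← sum_mul, e.sum_one, one_mul]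

theorem expect_ite_eq (e : SPExp Ω) (p : Belief Ω) :
    e.expect (fun q => if q = p then 1 else 0) = e.w p := by
  simp only [expect, mul_ite, mul_one, mul_zero, sum_ite_eq', Finsupp.mem_support_iff]
  split_ifs with hp
  · rfl
  · exact (not_not.1 hp).symm

theorem expect_triv (p : Belief Ω) (f : Belief Ω → ℝ) : (triv p).expect f = f p := by
  simp [expect, triv]

theorem expect_eq_w_of_eqOn {e : SPExp Ω} {f : Belief Ω → ℝ} {p : Belief Ω}
    (hf : ∀ q ∈ e.tau, f q = if q = p then 1 else 0) : e.expect f = e.w p := by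
  rw [← expect_ite_eq]
  exact sum_congr rfl fun q hq => by rw [hf q hq]

theorem eq_of_forall_continuous {e e' : SPExp Ω}
    (h : ∀ f, Continuous f → e.expect f = e'.expect f) : e = e' := by
  ext p
  obtain ⟨f, hf0, hf1, -⟩ := exists_continuous_zero_one_of_isClosed
    (s := ((e.tau ∪ e'.tau).erase p : Set (Belief Ω))) (t := {p})
    (Finset.isClosed _) isClosed_singleton (by simp)
  have hfq : ∀ q ∈ e.tau ∪ e'.tau, f q = if q = p then 1 else 0 := fun q hq => by
    split_ifs with hqp
    · exact hf1 (Set.mem_singleton_iff.2 hqp)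
    · exact hf0 (mem_coe.2 (mem_erase.2 ⟨hqp, hq⟩))
  rw [← expect_eq_w_of_eqOn fun q hq => hfq q (mem_union_left _ hq),
    ← expect_eq_w_of_eqOn fun q hq => hfq q (mem_union_right _ hq)]
  exact h f f.continuous

noncomputable def ofWeights {ι : Type*} [Fintype ι] (q : ι → Belief Ω) (lam : ι → ℝ)
    (hnn : ∀ i, 0 ≤ lam i) (hsum : ∑ i, lam i = 1) : SPExp Ω where
  w := Finsupp.mapDomain q (Finsupp.equivFunOnFinite.symm lam)
  nonneg := Finsupp.mapDomain_nonneg (g := Finsupp.equivFunOnFinite.symm lam) hnn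
  sum_one := by
    simpa [hsum, Finsupp.sum] using Finsupp.sum_mapDomain_equivFunOnFinite_symm q lam fun _ => 1

section ofWeights

variable {ι : Type*} [Fintype ι] (q : ι → Belief Ω) (lam : ι → ℝ)
  (hnn : ∀ i, 0 ≤ lam i) (hsum : ∑ i, lam i = 1)

theorem expect_ofWeights (f : Belief Ω → ℝ) :
    (ofWeights q lam hnn hsum).expect f = ∑ i, lam i * f (q i) :=
  Finsupp.sum_mapDomain_equivFunOnFinite_symm q lam f

theorem w_ofWeights (p : Belief Ω) :
    (ofWeights q lam hnn hsum).w p = ∑ i, if q i = p then lam i else 0 := by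
  simp [← expect_ite_eq, expect_ofWeights]

theorem exists_eq_of_mem_tau_ofWeights {p : Belief Ω}
    (hp : p ∈ (ofWeights q lam hnn hsum).tau) : ∃ i, q i = p := by
  obtain ⟨i, -, hi⟩ := by simpa using Finsupp.mapDomain_support hp
  exact ⟨i, hi⟩

end ofWeights

theorem exists_eq_ofWeights {ι : Type*} [Fintype ι] (e : SPExp Ω) (q : ι → Belief Ω)
    (hq : ∀ p ∈ e.tau, ∃ i, q i = p) :
    ∃ (lam : ι → ℝ) (hnn : ∀ i, 0 ≤ lam i) (hsum : ∑ i, lam i = 1),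
      e = ofWeights q lam hnn hsum := by
  have : Nonempty ι := by
    obtain ⟨p, hp⟩ := nonempty_of_sum_ne_zero (e.sum_one ▸ one_ne_zero)
    exact (hq p hp).nonempty
  choose! g hg using hq
  refine ⟨Finsupp.mapDomain g e.w, Finsupp.mapDomain_nonneg e.nonneg, ?_, ?_⟩
  · rw [← Finsupp.sum_fintype _ (fun _ a => a) fun _ => rfl,
      Finsupp.sum_mapDomain_index (fun _ => rfl) fun _ _ _ => rfl]
    exact e.sum_one
  · ext1
    change e.w = Finsupp.mapDomain q (Finsupp.equivFunOnFinite.symm _)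
    rw [Finsupp.equivFunOnFinite_symm_coe, ← Finsupp.mapDomain_comp,
      Finsupp.mapDomain_congr (f := q ∘ g) (g := id) hg, Finsupp.mapDomain_id]

theorem weakTendsto_ofWeights {ι : Type*} [Fintype ι] {qs : ℕ → ι → Belief Ω}
    {lams : ℕ → ι → ℝ} {hnns : ∀ t i, 0 ≤ lams t i} {hsums : ∀ t, ∑ i, lams t i = 1}
    {q : ι → Belief Ω} {lam : ι → ℝ} {hnn : ∀ i, 0 ≤ lam i} {hsum : ∑ i, lam i = 1}
    (hq : ∀ i, Tendsto (fun t => qs t i) atTop (𝓝 (q i)))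
    (hlam : ∀ i, Tendsto (fun t => lams t i) atTop (𝓝 (lam i))) :
    WeakTendsto (fun t => ofWeights (qs t) (lams t) (hnns t) (hsums t))
      (ofWeights q lam hnn hsum) := fun f hf => by
  simp only [expect_ofWeights]
  exact tendsto_finsetSum _ fun i _ => (hlam i).mul ((hf.tendsto _).comp (hq i))

end SPExp

section WeakTendsto

variable {Ω : Type*} [Fintype Ω] {es : ℕ → SPExp Ω} {e : SPExp Ω}

theorem WeakTendsto.comp {φ : ℕ → ℕ} (h : WeakTendsto es e) (hφ : Tendsto φ atTop atTop) :
    WeakTendsto (es ∘ φ) e := fun f hf => (h f hf).comp hφ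

theorem WeakTendsto.tendsto_sigma (h : WeakTendsto es e) :
    Tendsto (fun i => (es i).sigma) atTop (𝓝 e.sigma) :=
  tendsto_subtype_rng.2 <| tendsto_pi_nhds.2 fun ω =>
    h (fun p => p.val ω) ((continuous_apply ω).comp continuous_subtype_val)

theorem WeakTendsto.mem_trivials (h : WeakTendsto es e) (htriv : ∀ i, es i ∈ Trivials Ω) :
    e ∈ Trivials Ω := by
  choose ps hps using htriv
  obtain ⟨p, -, φ, hφ, hp⟩ := isCompact_univ.tendsto_subseq (x := ps) fun _ => Set.mem_univ _
  refine ⟨p, SPExp.eq_of_forall_continuous fun f hf => ?_⟩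
  refine tendsto_nhds_unique ?_ ((h f hf).comp hφ.tendsto_atTop)
  simpa [Function.comp_def, ← hps, SPExp.expect_triv] using (hf.tendsto p).comp hp

theorem WeakTendsto.eventually_notMem_trivials (h : WeakTendsto es e) (he : e ∉ Trivials Ω) :
    ∀ᶠ i in atTop, es i ∉ Trivials Ω := by
  by_contra hfreq
  obtain ⟨φ, hφ, htriv⟩ := extraction_of_frequently_atTop (not_eventually.1 hfreq |>.mono
    fun _ => not_not.1)
  exact he ((h.comp hφ.tendsto_atTop).mem_trivials htriv)

end WeakTendsto

section Tree

variable {h : ℕ}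

def childEquiv (h n : ℕ) : Fin (h ^ n) × Fin h ≃ Fin (h ^ (n + 1)) :=
  finProdFinEquiv.trans (finCongr (pow_succ h n).symm)

theorem childEquiv_apply {n : ℕ} (m : Fin (h ^ n)) (j : Fin h) :
    childEquiv h n (m, j) = treeChild m j :=
  Fin.ext (by simp [childEquiv, treeChild, finProdFinEquiv]; ring)

theorem treeChild_inj {n : ℕ} {m m' : Fin (h ^ n)} {j j' : Fin h}
    (he : treeChild m j = treeChild m' j') : m = m' ∧ j = j' :=
  Prod.ext_iff.1 <| (childEquiv h n).injective (a₁ := (m, j)) (a₂ := (m', j')) <| by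
    rw [childEquiv_apply, childEquiv_apply, he]

theorem sum_treeChild {M : Type*} [AddCommMonoid M] {n : ℕ} (f : Fin (h ^ (n + 1)) → M) :
    ∑ c, f c = ∑ m, ∑ j, f (treeChild m j) := by
  simp [← Equiv.sum_comp (childEquiv h n) f, Fintype.sum_prod_type, childEquiv_apply]

theorem descendant_succ_treeChild_iff {n l : ℕ} {c : Fin (h ^ n)} {m : Fin (h ^ (n + l))}
    {j : Fin h} : Descendant (l + 1) c (treeChild m j) ↔ Descendant l c m := by
  refine ⟨fun ⟨_, _, hd, he⟩ => (treeChild_inj he).1 ▸ hd, fun hd => ⟨m, j, hd, rfl⟩⟩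

theorem Descendant.unique {n : ℕ} :
    ∀ {l : ℕ} {c₁ c₂ : Fin (h ^ n)} {c' : Fin (h ^ (n + l))},
      Descendant l c₁ c' → Descendant l c₂ c' → c₁ = c₂
  | 0, _, _, _, h₁, h₂ => h₁.trans h₂.symm
  | _ + 1, _, _, _, ⟨_, _, hd₁, he₁⟩, ⟨_, _, hd₂, he₂⟩ =>
      Descendant.unique hd₁ ((treeChild_inj (he₁.symm.trans he₂)).1 ▸ hd₂)

noncomputable def descendants {n : ℕ} (l : ℕ) (c : Fin (h ^ n)) : Finset (Fin (h ^ (n + l))) :=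
  univ.filter (Descendant l c)

theorem mem_descendants {n l : ℕ} {c : Fin (h ^ n)} {c' : Fin (h ^ (n + l))} :
    c' ∈ descendants l c ↔ Descendant l c c' := by
  simp [descendants]

theorem descendants_zero {n : ℕ} (c : Fin (h ^ n)) : descendants 0 c = {c} := by
  ext c'
  simp only [descendants, mem_filter, mem_univ, true_and, mem_singleton]
  exact eq_comm

end Tree

namespace HBranch

variable {Ω : Type*} [Fintype Ω] {F : Set (SPExp Ω)} {μ : Belief Ω} {h : ℕ}
  (B : HBranch Ω F h μ)

theorem π_le_one (n : ℕ) (m : Fin (h ^ n)) : B.π n m ≤ 1 :=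
  B.π_sum n ▸ single_le_sum (fun m' _ => B.π_nonneg n m') (mem_univ m)

theorem sum_π_treeChild (n : ℕ) (m : Fin (h ^ n)) :
    ∑ j, B.π (n + 1) (treeChild m j) = B.π n m := by
  set beliefs := univ.image fun j => B.β (n + 1) (treeChild m j)
  have htau : (B.η n m).tau ⊆ beliefs := fun p hp => by
    obtain ⟨j, hj⟩ := B.compat_tau n m p hp
    exact mem_image.2 ⟨j, mem_univ _, hj⟩
  calc ∑ j, B.π (n + 1) (treeChild m j)
      = ∑ p ∈ beliefs, B.π n m * (B.η n m).w p := by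
        rw [← sum_fiberwise_of_maps_to (g := fun j => B.β (n + 1) (treeChild m j))
          fun j _ => mem_image_of_mem (fun j => B.β (n + 1) (treeChild m j)) (mem_univ j)]
        exact sum_congr rfl fun p _ => by rw [← B.consistent, sum_filter]
    _ = B.π n m := by
        rw [← mul_sum, ← sum_subset htau fun p _ hp => Finsupp.notMem_support_iff.1 hp,
          SPExp.tau, (B.η n m).sum_one, mul_one]

theorem π_treeChild_le (n : ℕ) (m : Fin (h ^ n)) (j : Fin h) :
    B.π (n + 1) (treeChild m j) ≤ B.π n m :=
  B.sum_π_treeChild n m ▸ single_le_sum (fun _ _ => B.π_nonneg _ _) (mem_univ j)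

theorem sum_π_descendants : ∀ (l : ℕ) {n : ℕ} (c : Fin (h ^ n)),
    ∑ c' ∈ descendants l c, B.π (n + l) c' = B.π n c
  | 0, _, c => by rw [descendants_zero, sum_singleton]; rfl
  | l + 1, n, c => by
      rw [← sum_π_descendants l c, descendants, descendants, sum_filter, sum_filter]
      refine (sum_treeChild (n := n + l) _).trans (sum_congr rfl fun m _ => ?_)
      simp only [descendant_succ_treeChild_iff]
      split_ifs
      · exact B.sum_π_treeChild (n + l) m
      · simp

theorem sum_π_biUnion_descendants (l : ℕ) {n : ℕ} (A : Finset (Fin (h ^ n))) :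
    ∑ c' ∈ A.biUnion (descendants l), B.π (n + l) c' = ∑ c ∈ A, B.π n c := by
  rw [sum_biUnion fun c₁ _ c₂ _ hne => disjoint_left.2 fun c' h₁ h₂ =>
    hne (Descendant.unique (mem_descendants.1 h₁) (mem_descendants.1 h₂))]
  exact sum_congr rfl fun c _ => B.sum_π_descendants l c

theorem exists_childWeights (n : ℕ) (m : Fin (h ^ n)) :
    ∃ (lam : Fin h → ℝ) (hnn : ∀ j, 0 ≤ lam j) (hsum : ∑ j, lam j = 1),
      B.η n m = SPExp.ofWeights (fun j => B.β (n + 1) (treeChild m j)) lam hnn hsum ∧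
      ∀ j, B.π (n + 1) (treeChild m j) = B.π n m * lam j := by
  rcases (B.π_nonneg n m).eq_or_lt with hzero | hpos
  · -- at a null vertex `consistent` says nothing about `η`, which is matched to the children
    obtain ⟨lam, hnn, hsum, hη⟩ := (B.η n m).exists_eq_ofWeights _ (B.compat_tau n m)
    refine ⟨lam, hnn, hsum, hη, fun j => ?_⟩
    rw [← hzero, zero_mul]
    exact le_antisymm (hzero ▸ B.π_treeChild_le n m j) (B.π_nonneg _ _)
  · refine ⟨fun j => B.π (n + 1) (treeChild m j) / B.π n m,
      fun j => div_nonneg (B.π_nonneg _ _) hpos.le,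
      by rw [← sum_div, sum_π_treeChild, div_self hpos.ne'], ?_,
      fun j => (mul_div_cancel₀ _ hpos.ne').symm⟩
    ext p
    rw [SPExp.w_ofWeights, eq_div_of_mul_eq hpos.ne'
      ((mul_comm _ _).trans (B.consistent n m p).symm), sum_div]
    simp only [ite_div, zero_div]

noncomputable def childWeights (n : ℕ) (m : Fin (h ^ n)) : Fin h → ℝ :=
  (B.exists_childWeights n m).choose

theorem childWeights_nonneg (n : ℕ) (m : Fin (h ^ n)) (j : Fin h) :
    0 ≤ B.childWeights n m j :=
  (B.exists_childWeights n m).choose_spec.1 j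

theorem sum_childWeights (n : ℕ) (m : Fin (h ^ n)) : ∑ j, B.childWeights n m j = 1 :=
  (B.exists_childWeights n m).choose_spec.2.1

theorem childWeights_le_one (n : ℕ) (m : Fin (h ^ n)) (j : Fin h) :
    B.childWeights n m j ≤ 1 :=
  B.sum_childWeights n m ▸ single_le_sum (fun j' _ => B.childWeights_nonneg n m j') (mem_univ j)

theorem η_eq_ofWeights (n : ℕ) (m : Fin (h ^ n)) :
    B.η n m = SPExp.ofWeights (fun j => B.β (n + 1) (treeChild m j)) (B.childWeights n m)
      (B.childWeights_nonneg n m) (B.sum_childWeights n m) :=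
  (B.exists_childWeights n m).choose_spec.2.2.1

theorem π_treeChild_eq (n : ℕ) (m : Fin (h ^ n)) (j : Fin h) :
    B.π (n + 1) (treeChild m j) = B.π n m * B.childWeights n m j :=
  (B.exists_childWeights n m).choose_spec.2.2.2 j

theorem termProb_add_sum_not_termAfter (N : ℕ) :
    B.termProb N + ∑ m with ¬B.TermAfter N m, B.π N m = 1 := by
  rw [termProb, ← sum_filter, sum_filter_add_sum_filter_not, π_sum]

theorem exists_subseq_tendsto (Bs : ℕ → HBranch Ω F h μ) :
    ∃ (ψ : ℕ → ℕ) (π : ∀ n, Fin (h ^ n) → ℝ) (β : ∀ n, Fin (h ^ n) → Belief Ω)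
      (lam : ∀ n, Fin (h ^ n) → Fin h → ℝ), StrictMono ψ ∧
      (∀ n m, Tendsto (fun t => (Bs (ψ t)).π n m) atTop (𝓝 (π n m))) ∧
      (∀ n m, Tendsto (fun t => (Bs (ψ t)).β n m) atTop (𝓝 (β n m))) ∧
      ∀ n m j, Tendsto (fun t => (Bs (ψ t)).childWeights n m j) atTop (𝓝 (lam n m j)) := by
  let data : ℕ → (Σ n, Fin (h ^ n)) → ℝ × Belief Ω × (Fin h → ℝ) := fun k v =>
    ((Bs k).π v.1 v.2, (Bs k).β v.1 v.2, (Bs k).childWeights v.1 v.2)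
  let K : Set ((Σ n, Fin (h ^ n)) → ℝ × Belief Ω × (Fin h → ℝ)) :=
    Set.univ.pi fun _ => Set.Icc 0 1 ×ˢ Set.univ ×ˢ Set.univ.pi fun _ => Set.Icc 0 1
  have hK : IsCompact K := isCompact_univ_pi fun _ =>
    isCompact_Icc.prod (isCompact_univ.prod (isCompact_univ_pi fun _ => isCompact_Icc))
  have hdata k : data k ∈ K := Set.mem_univ_pi.2 fun v =>
    ⟨⟨(Bs k).π_nonneg _ _, (Bs k).π_le_one _ _⟩, trivial, Set.mem_univ_pi.2 fun j =>
      ⟨(Bs k).childWeights_nonneg _ _ j, (Bs k).childWeights_le_one _ _ j⟩⟩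
  obtain ⟨a, -, ψ, hψ, ha⟩ := hK.tendsto_subseq hdata
  have hv (v : Σ n, Fin (h ^ n)) : Tendsto (fun t => data (ψ t) v) atTop (𝓝 (a v)) :=
    tendsto_pi_nhds.1 ha v
  exact ⟨ψ, fun n m => (a ⟨n, m⟩).1, fun n m => (a ⟨n, m⟩).2.1, fun n m => (a ⟨n, m⟩).2.2, hψ,
    fun n m => (hv ⟨n, m⟩).fst_nhds, fun n m => (hv ⟨n, m⟩).snd_nhds.fst_nhds,
    fun n m => tendsto_pi_nhds.1 (hv ⟨n, m⟩).snd_nhds.snd_nhds⟩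

theorem exists_subseq_tendsto_branch
    (hF : ∀ es : ℕ → SPExp Ω, (∀ i, es i ∈ F) → ∀ e, WeakTendsto es e → e ∈ F)
    (Bs : ℕ → HBranch Ω F h μ) :
    ∃ (B : HBranch Ω F h μ) (ψ : ℕ → ℕ), StrictMono ψ ∧
      (∀ n m, Tendsto (fun t => (Bs (ψ t)).π n m) atTop (𝓝 (B.π n m))) ∧
      (∀ n m, Tendsto (fun t => (Bs (ψ t)).β n m) atTop (𝓝 (B.β n m))) ∧
      ∀ n m, WeakTendsto (fun t => (Bs (ψ t)).η n m) (B.η n m) := by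
  obtain ⟨ψ, π, β, lam, hψ, hπ, hβ, hlam⟩ := exists_subseq_tendsto Bs
  have hlam_nonneg n m j : 0 ≤ lam n m j :=
    ge_of_tendsto' (hlam n m j) fun t => (Bs (ψ t)).childWeights_nonneg n m j
  have hlam_sum n m : ∑ j, lam n m j = 1 :=
    ((tendsto_const_nhds_iff (l := atTop)).1 <| by
      simpa only [sum_childWeights] using tendsto_finsetSum univ fun j _ => hlam n m j).symm
  have hπ_child n m j : π (n + 1) (treeChild m j) = π n m * lam n m j :=
    tendsto_nhds_unique (hπ _ _) <| by
      simpa only [π_treeChild_eq] using (hπ n m).mul (hlam n m j)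
  let η n m := SPExp.ofWeights (fun j => β (n + 1) (treeChild m j)) (lam n m)
    (hlam_nonneg n m) (hlam_sum n m)
  have hη n m : WeakTendsto (fun t => (Bs (ψ t)).η n m) (η n m) := by
    simp only [η_eq_ofWeights]
    exact SPExp.weakTendsto_ofWeights (fun j => hβ _ _) (hlam n m)
  refine ⟨{
    π := π
    β := β
    η := η
    π_nonneg := fun n m => ge_of_tendsto' (hπ n m) fun t => (Bs (ψ t)).π_nonneg n m
    π_sum := fun n => ((tendsto_const_nhds_iff (l := atTop)).1 <| by
      simpa only [π_sum] using tendsto_finsetSum univ fun m _ => hπ n m).symm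
    η_mem := fun n m => hF _ (fun t => (Bs (ψ t)).η_mem n m) _ (hη n m)
    β_root := fun m => ((tendsto_const_nhds_iff (l := atTop)).1 <| by
      simpa only [β_root] using hβ 0 m).symm
    compat_sigma := fun n m => tendsto_nhds_unique (hη n m).tendsto_sigma <| by
      simpa only [compat_sigma] using hβ n m
    compat_tau := fun n m p => SPExp.exists_eq_of_mem_tau_ofWeights _ _ _ _
    consistent := fun n m p => by
      simp only [η, hπ_child, SPExp.w_ofWeights, mul_sum, mul_ite, mul_zero] },
    ψ, hψ, hπ, hβ, hη⟩

variable {Bs : ℕ → HBranch Ω F h μ} {B}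

theorem eventually_not_termAfter
    (hπ : ∀ n m, Tendsto (fun t => (Bs t).π n m) atTop (𝓝 (B.π n m)))
    (hη : ∀ n m, WeakTendsto (fun t => (Bs t).η n m) (B.η n m))
    {N : ℕ} {m : Fin (h ^ N)} (hm : ¬B.TermAfter N m) :
    ∀ᶠ t in atTop, ¬(Bs t).TermAfter N m := by
  by_cases htriv : B.η N m ∈ Trivials Ω
  · obtain ⟨l, c', hdesc, hpos, hnontriv⟩ : ∃ l c', Descendant l m c' ∧
        0 < B.π (N + l) c' ∧ B.η (N + l) c' ∉ Trivials Ω := by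
      simpa [TermAfter, htriv] using hm
    filter_upwards [(hη _ c').eventually_notMem_trivials hnontriv,
      (hπ _ c').eventually (eventually_gt_nhds hpos)] with t ht hpos_t hterm
    exact ht (hterm.2 l c' hdesc hpos_t)
  · filter_upwards [(hη N m).eventually_notMem_trivials htriv] with t ht hterm
    exact ht hterm.1

theorem le_termProb_of_tendsto
    (hπ : ∀ n m, Tendsto (fun t => (Bs t).π n m) atTop (𝓝 (B.π n m)))
    (hη : ∀ n m, WeakTendsto (fun t => (Bs t).η n m) (B.η n m))
    {N : ℕ} {c : ℝ} (hc : ∀ t, c ≤ (Bs t).termProb N) : c ≤ B.termProb N := by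
  set bad := univ.filter fun m => ¬B.TermAfter N m
  have hbad : ∀ᶠ t in atTop, ∑ m ∈ bad, (Bs t).π N m ≤ 1 - c := by
    filter_upwards [(eventually_all_finset bad).2 fun m hm =>
      eventually_not_termAfter hπ hη (mem_filter.1 hm).2] with t ht
    have hsub : ∑ m ∈ bad, (Bs t).π N m ≤ ∑ m with ¬(Bs t).TermAfter N m, (Bs t).π N m :=
      sum_le_sum_of_subset_of_nonneg (fun m hm => mem_filter.2 ⟨mem_univ m, ht m hm⟩)
        fun _ _ _ => (Bs t).π_nonneg _ _
    linarith [(Bs t).termProb_add_sum_not_termAfter N, hc t]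
  linarith [le_of_tendsto (tendsto_finsetSum bad fun m _ => hπ N m) hbad,
    B.termProb_add_sum_not_termAfter N]

end HBranch

section Histories

variable {Ω : Type*} [Fintype Ω] {F : Set (SPExp Ω)} {μ : Belief Ω}

theorem histExp_succ (S : SeqP F μ) (g : Hist Ω → ℝ) (n : ℕ) (ξ : Hist Ω) :
    histExp S g (n + 1) ξ =
      histExp S (fun ξ' => (S.next ξ').expect fun p => g ((S.next ξ', p) :: ξ')) n ξ := by
  induction n generalizing ξ with
  | zero => rfl
  | succ n ih => exact congrArg (S.next ξ).expect (funext fun p => ih _)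

theorem histExp_eq_of_length_le {S : SeqP F μ} {g : Hist Ω → ℝ} {c : ℝ} :
    ∀ (n : ℕ) (ξ : Hist Ω), (∀ ξ', ξ.length + n ≤ ξ'.length → g ξ' = c) →
      histExp S g n ξ = c
  | 0, ξ, hg => hg ξ le_rfl
  | n + 1, ξ, hg => by
      rw [histExp, ← (S.next ξ).expect_const c]
      exact congrArg _ <| funext fun p => histExp_eq_of_length_le n _ fun ξ' hξ' =>
        hg ξ' (by simp only [List.length_cons] at hξ'; omega)

noncomputable def histFinset (S : SeqP F μ) : ℕ → Finset (Hist Ω)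
  | 0 => {[]}
  | n + 1 => (histFinset S n).biUnion fun ξ => (S.next ξ).tau.image fun p => (S.next ξ, p) :: ξ

theorem mem_histFinset {S : SeqP F μ} {n : ℕ} {ξ : Hist Ω} :
    ξ ∈ histFinset S n ↔ ξ ∈ Hists S n := by
  induction n generalizing ξ with
  | zero => simp [histFinset, Hists]
  | succ n ih =>
      simp only [histFinset, mem_biUnion, mem_image, ih]
      exact ⟨fun ⟨ξ₀, hξ₀, p, hp, he⟩ => ⟨ξ₀, hξ₀, p, hp, he.symm⟩,
        fun ⟨ξ₀, hξ₀, p, hp, he⟩ => ⟨ξ₀, hξ₀, p, hp, he.symm⟩⟩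

theorem histExp_eq_sum (S : SeqP F μ) (n : ℕ) (g : Hist Ω → ℝ) :
    histExp S g n [] = ∑ ξ ∈ histFinset S n, histProb ξ * g ξ := by
  induction n generalizing g with
  | zero => simp [histExp, histFinset, histProb]
  | succ n ih =>
      rw [histExp_succ, ih, histFinset, sum_biUnion]
      · refine sum_congr rfl fun ξ _ => ?_
        rw [sum_image fun p _ q _ he => (Prod.ext_iff.1 (List.cons_eq_cons.1 he).1).2,
          SPExp.expect, mul_sum]
        exact sum_congr rfl fun p _ => by rw [histProb]; ring
      · intro ξ₁ _ ξ₂ _ hne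
        refine disjoint_left.2 fun ξ h₁ h₂ => hne ?_
        obtain ⟨p₁, -, rfl⟩ := mem_image.1 h₁
        obtain ⟨p₂, -, he⟩ := mem_image.1 h₂
        exact (List.cons_eq_cons.1 he).2.symm

theorem histExp_eq_sum_of_fiber {ι : Type*} [Fintype ι] {S : SeqP F μ} {n : ℕ}
    {r : ι → Hist Ω} {π : ι → ℝ} (hmem : ∀ i, r i ∈ Hists S n)
    (hprob : ∀ ξ ∈ Hists S n, histProb ξ = ∑ i, if r i = ξ then π i else 0)
    (g : Hist Ω → ℝ) : histExp S g n [] = ∑ i, π i * g (r i) := by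
  rw [histExp_eq_sum, ← sum_fiberwise_of_maps_to (s := univ) (t := histFinset S n) (g := r)
    fun i _ => mem_histFinset.2 (hmem i)]
  refine sum_congr rfl fun ξ hξ => ?_
  rw [hprob ξ (mem_histFinset.1 hξ), ← sum_filter, sum_mul]
  exact sum_congr rfl fun i hi => by rw [(mem_filter.1 hi).2]

theorem lastBelief_padHist (ξ : Hist Ω) (l : ℕ) :
    lastBelief μ (padHist μ ξ l) = lastBelief μ ξ := by
  cases l <;> simp [padHist, List.replicate_succ, lastBelief]

theorem histProb_padHist (ξ : Hist Ω) (l : ℕ) : histProb (padHist μ ξ l) = histProb ξ := by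
  induction l with
  | zero => simp [padHist]
  | succ l ih =>
      rw [padHist, List.replicate_succ, List.cons_append, histProb, ← padHist, ih]
      simp [SPExp.triv]

theorem padHist_mem_Hists {S : SeqP F μ} {ξ : Hist Ω} {n : ℕ} (hξ : ξ ∈ Hists S n)
    (hS : TerminatesAfter S ξ) (l : ℕ) : padHist μ ξ l ∈ Hists S (n + l) := by
  induction l with
  | zero => simpa [padHist] using hξ
  | succ l ih =>
      refine ⟨padHist μ ξ l, ih, lastBelief μ ξ, ?_, ?_⟩
      · simp [hS l, SPExp.tau, SPExp.triv]
      · rw [hS l, padHist, List.replicate_succ, List.cons_append, ← padHist]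

theorem IsNStep.terminatesAfter {S : SeqP F μ} {n₀ : ℕ} (hS : IsNStep S n₀) {ξ : Hist Ω}
    (hξ : n₀ ≤ ξ.length) : TerminatesAfter S ξ := fun l => by
  rw [hS _ (by simp [padHist]; omega), lastBelief_padHist]

theorem IsNStep.termProb_eq_one {S : SeqP F μ} {n₀ : ℕ} (hS : IsNStep S n₀) {N : ℕ}
    (hN : n₀ ≤ N) : termProb S N = 1 :=
  histExp_eq_of_length_le N [] fun _ hξ => if_pos (hS.terminatesAfter (by simp at hξ; omega))

end Histories

section Representation

variable {Ω : Type*} [Fintype Ω] {F : Set (SPExp Ω)} {μ : Belief Ω} {h : ℕ}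
  {S : SeqP F μ} {B : HBranch Ω F h μ} {r : ∀ n, Fin (h ^ n) → Hist Ω}

/-- As `S` terminates after `r N c`, the padded history carries the whole mass of the subtrees
below the vertices representing `r N c`, so a descendant of `c` with positive mass represents it. -/
theorem eq_padHist_of_descendant (hmem : ∀ n c, r n c ∈ Hists S n)
    (hprob : ∀ n, ∀ ξ ∈ Hists S n, histProb ξ = ∑ c, if r n c = ξ then B.π n c else 0)
    (hsuffix : ∀ n l, ∀ ξ ∈ Hists S n, ∀ ξ' ∈ Hists S (n + l), ξ <:+ ξ' →
      ∀ c', r (n + l) c' = ξ' → ∃ c, r n c = ξ ∧ Descendant l c c')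
    {N l : ℕ} {c : Fin (h ^ N)} {c' : Fin (h ^ (N + l))}
    (hS : TerminatesAfter S (r N c)) (hc' : Descendant l c c') (hpos : 0 < B.π (N + l) c') :
    r (N + l) c' = padHist μ (r N c) l := by
  set ξ := r N c
  have hpad : padHist μ ξ l ∈ Hists S (N + l) := padHist_mem_Hists (hmem N c) hS l
  set fiber := univ.filter fun c'' => r (N + l) c'' = padHist μ ξ l
  set subtree := (univ.filter fun c₀ => r N c₀ = ξ).biUnion (descendants l)
  have hsub : fiber ⊆ subtree := fun c'' hc'' => by
    obtain ⟨c₀, hc₀, hd⟩ := hsuffix N l ξ (hmem N c) _ hpad (List.suffix_append _ _) c''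
      (mem_filter.1 hc'').2
    exact mem_biUnion.2 ⟨c₀, mem_filter.2 ⟨mem_univ _, hc₀⟩, mem_descendants.2 hd⟩
  have hmass : ∑ c'' ∈ fiber, B.π (N + l) c'' = ∑ c'' ∈ subtree, B.π (N + l) c'' := by
    rw [B.sum_π_biUnion_descendants, sum_filter, sum_filter, ← hprob _ _ hpad,
      histProb_padHist, hprob _ _ (hmem N c)]
  by_contra hne
  refine (sum_lt_sum_of_subset hsub ?_ (fun hc'' => hne (mem_filter.1 hc'').2) hpos
    fun _ _ _ => B.π_nonneg _ _).ne hmass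
  exact mem_biUnion.2 ⟨c, mem_filter.2 ⟨mem_univ _, rfl⟩, mem_descendants.2 hc'⟩

theorem Represents.termProb_le (hrep : Represents S B) (N : ℕ) :
    termProb S N ≤ B.termProb N := by
  obtain ⟨r, hr⟩ := hrep
  have hmem n c := (hr n).1 c
  have hprob n := (hr n).2.1
  have hnext n c := ((hr n).2.2.1 c).2
  have hsuffix n l ξ hξ ξ' hξ' := ((hr n).2.2.2 l ξ hξ ξ' hξ').1
  have hterm {c : Fin (h ^ N)} (hS : TerminatesAfter S (r N c)) : B.TermAfter N c := by
    refine ⟨⟨lastBelief μ (r N c), ?_⟩, fun l c' hd hpos => ⟨lastBelief μ (r N c), ?_⟩⟩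
    · rw [← hnext, ← hS 0]; rfl
    · rw [← hnext, eq_padHist_of_descendant hmem hprob hsuffix hS hd hpos, hS l]
  rw [termProb, histExp_eq_sum_of_fiber (hmem N) (hprob N), HBranch.termProb]
  refine sum_le_sum fun c _ => ?_
  by_cases hS : TerminatesAfter S (r N c)
  · rw [if_pos hS, if_pos (hterm hS), mul_one]
  · rw [if_neg hS, mul_zero]
    exact ite_nonneg (B.π_nonneg N c) le_rfl

end Representation

theorem lem_iterate_converge_general {Ω : Type*} [Fintype Ω]
    (F : Set (SPExp Ω))
    (h : ℕ) (hA1 : Assumption1 F h) (μ : Belief Ω)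
    (nk : ℕ → ℕ) (Sk : ℕ → SeqP F μ)
    (hstep : ∀ k, IsNStep (Sk k) (nk k))
    (B : ℕ → HBranch Ω F h μ) (hrep : ∀ k, Represents (Sk k) (B k)) :
    ∃ Bstar : HBranch Ω F h μ,
      (∀ ε : ℝ, 0 < ε → ∀ N : ℕ, (∀ k, N ≤ nk k → 1 - ε ≤ termProb (Sk k) N) →
        1 - ε ≤ Bstar.termProb N) ∧
      ∀ n : ℕ, 1 ≤ n →
        ∃ φ : ℕ → ℕ, StrictMono φ ∧
          ∀ i ≤ n,
            (∀ m, Filter.Tendsto (fun l => (B (φ l)).π i m) Filter.atTop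
              (nhds (Bstar.π i m))) ∧
            (∀ m, TVTendsto (fun l => (B (φ l)).β i m) (Bstar.β i m)) ∧
            (∀ m, WeakTendsto (fun l => (B (φ l)).η i m) (Bstar.η i m)) := by
  obtain ⟨Bstar, ψ, hψ, hπ, hβ, hη⟩ := HBranch.exists_subseq_tendsto_branch hA1.2 B
  refine ⟨Bstar, fun ε hε N hN => HBranch.le_termProb_of_tendsto hπ hη fun t => ?_,
    fun _ _ => ⟨ψ, hψ, fun i _ => ⟨hπ i, fun m => tvTendsto_of_tendsto (hβ i m), hη i⟩⟩⟩
  calc 1 - ε ≤ termProb (Sk (ψ t)) N := by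
        rcases le_or_gt N (nk (ψ t)) with hle | hlt
        · exact hN _ hle
        · rw [(hstep _).termProb_eq_one hlt.le]
          linarith
    _ ≤ (B (ψ t)).termProb N := (hrep _).termProb_le N

/-- Lemma 9 (lem-iterate-converge): from a sequence of finite-step sequential persuasions
satisfying Assumption 3 (here given explicitly), represented by h-branching persuasions
B_k, one extracts a limiting h-branching persuasion B* with the same termination rate,
every finite prefix of which is a subsequential limit. -/
theorem lem_iterate_converge {Ω : Type*} [Fintype Ω] [Nonempty Ω]
    (F : Set (SPExp Ω)) (hTF : Trivials Ω ⊆ F)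
    (v : Belief Ω → ℝ) (Vlo Vhi : ℝ) (hVlo : 0 < Vlo) (hVV : Vlo ≤ Vhi)
    (hvlo : ∀ p, Vlo ≤ v p) (hvhi : ∀ p, v p ≤ Vhi)
    (husc : UpperSemicontinuous v)
    (h : ℕ) (hA1 : Assumption1 F h) (μ : Belief Ω)
    (nk : ℕ → ℕ) (Sk : ℕ → SeqP F μ)
    (hstep : ∀ k, IsNStep (Sk k) (nk k))
    (hlim : Filter.Tendsto (fun k => stepUtility v (Sk k) (nk k)) Filter.atTop
      (nhds (vInf F v μ)))
    (hterm : ∀ ε : ℝ, 0 < ε → ∃ N : ℕ, ∀ k, N ≤ nk k → 1 - ε ≤ termProb (Sk k) N)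
    (B : ℕ → HBranch Ω F h μ) (hrep : ∀ k, Represents (Sk k) (B k)) :
    ∃ Bstar : HBranch Ω F h μ,
      (∀ ε : ℝ, 0 < ε → ∀ N : ℕ, (∀ k, N ≤ nk k → 1 - ε ≤ termProb (Sk k) N) →
        1 - ε ≤ Bstar.termProb N) ∧
      ∀ n : ℕ, 1 ≤ n →
        ∃ φ : ℕ → ℕ, StrictMono φ ∧
          ∀ i ≤ n,
            (∀ m, Filter.Tendsto (fun l => (B (φ l)).π i m) Filter.atTop
              (nhds (Bstar.π i m))) ∧
            (∀ m, TVTendsto (fun l => (B (φ l)).β i m) (Bstar.β i m)) ∧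
            (∀ m, WeakTendsto (fun l => (B (φ l)).η i m) (Bstar.η i m)) :=
  lem_iterate_converge_general F h hA1 μ nk Sk hstep B hrep
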